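/- Let n ≥ 3, let f₁,...,fₙ : ℝⁿ → ℝ be smooth with 3fᵢ(x) + fⱼ(x) ≠ 0 for all x and all i ≠ j, and let φ be a smooth positive solution of the system φ_{,xᵢxᵢ}/φ − |∇φ|²/(2φ²) = φ² fᵢ for every i and φ_{,xᵢxⱼ} = 0 for i ≠ j. Then for all pairwise distinct indices i, j, k one has f_{k,xⱼ}/(3fₖ + fⱼ) = f_{i,xⱼ}/(3fᵢ + fⱼ). -/

import Mathlib

noncomputable def pd {n : ℕ} (φ : (Fin n → ℝ) → ℝ) (i : Fin n) (x : Fin n → ℝ) : ℝ :=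
  fderiv ℝ φ x (Pi.single i 1)

lemma contDiff_pd {n : ℕ} {u : (Fin n → ℝ) → ℝ} (hu : ContDiff ℝ (⊤ : ℕ∞) u) (i : Fin n) :
    ContDiff ℝ (⊤ : ℕ∞) (pd u i) :=
  (hu.fderiv_right (by simp)).clm_apply contDiff_const

lemma pd_mul {n : ℕ} {u v : (Fin n → ℝ) → ℝ} {x : Fin n → ℝ}
    (hu : DifferentiableAt ℝ u x) (hv : DifferentiableAt ℝ v x) (j : Fin n) :
    pd (fun y => u y * v y) j x = pd u j x * v x + u x * pd v j x := by
  unfold pd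
  rw [fderiv_fun_mul hu hv]
  simp only [ContinuousLinearMap.add_apply, ContinuousLinearMap.smul_apply, smul_eq_mul]
  ring

lemma pd_sub {n : ℕ} {u v : (Fin n → ℝ) → ℝ} {x : Fin n → ℝ}
    (hu : DifferentiableAt ℝ u x) (hv : DifferentiableAt ℝ v x) (j : Fin n) :
    pd (fun y => u y - v y) j x = pd u j x - pd v j x := by
  unfold pd
  rw [fderiv_fun_sub hu hv]
  simp

lemma pd_div_const {n : ℕ} {u : (Fin n → ℝ) → ℝ} {x : Fin n → ℝ}
    (hu : DifferentiableAt ℝ u x) (c : ℝ) (j : Fin n) :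
    pd (fun y => u y / c) j x = pd u j x / c := by
  unfold pd
  simp only [div_eq_mul_inv]
  rw [fderiv_mul_const hu]
  simp [mul_comm]

lemma pd_sum {n : ℕ} {u : Fin n → (Fin n → ℝ) → ℝ} {x : Fin n → ℝ}
    (hu : ∀ k, DifferentiableAt ℝ (u k) x) (j : Fin n) :
    pd (fun y => ∑ k, u k y) j x = ∑ k, pd (u k) j x := by
  unfold pd
  rw [fderiv_fun_sum (fun k _ => hu k)]
  simp

lemma pd_pow {n : ℕ} {u : (Fin n → ℝ) → ℝ} {x : Fin n → ℝ}
    (hu : DifferentiableAt ℝ u x) (m : ℕ) (j : Fin n) :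
    pd (fun y => u y ^ m) j x = m * u x ^ (m - 1) * pd u j x := by
  unfold pd
  have h : HasFDerivAt (fun y => u y ^ m) (((m : ℝ) * u x ^ (m - 1)) • fderiv ℝ u x) x :=
    (hasDerivAt_pow m (u x)).comp_hasFDerivAt x hu.hasFDerivAt
  rw [h.fderiv]
  simp [mul_comm]

lemma pd_zero {n : ℕ} {x : Fin n → ℝ} (j : Fin n) :
    pd (fun _ : Fin n → ℝ => (0:ℝ)) j x = 0 := by
  simp [pd]

lemma pd_pd {n : ℕ} {u : (Fin n → ℝ) → ℝ} (hu : ContDiff ℝ (⊤ : ℕ∞) u) (i j : Fin n) (x : Fin n → ℝ) :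
    pd (pd u i) j x = fderiv ℝ (fderiv ℝ u) x (Pi.single j 1) (Pi.single i 1) := by
  unfold pd
  rw [fderiv_clm_apply (((hu.fderiv_right (m := (⊤ : ℕ∞)) (by simp)).differentiable (by simp)) x)
    (differentiableAt_const _)]
  simp

lemma pd_comm {n : ℕ} {u : (Fin n → ℝ) → ℝ} (hu : ContDiff ℝ (⊤ : ℕ∞) u) (i j : Fin n)
    (x : Fin n → ℝ) :
    pd (pd u i) j x = pd (pd u j) i x := by
  rw [pd_pd hu, pd_pd hu]
  exact (hu.contDiffAt.isSymmSndFDerivAt (by rw [minSmoothness_of_isRCLikeNormedField]; exact WithTop.coe_le_coe.mpr le_top)) _ _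

theorem stmt2 (n : ℕ) (hn : 3 ≤ n)
    (f : Fin n → (Fin n → ℝ) → ℝ)
    (hf : ∀ i, ContDiff ℝ (⊤ : ℕ∞) (f i))
    (hne : ∀ i j : Fin n, i ≠ j → ∀ x, 3 * f i x + f j x ≠ 0)
    (φ : (Fin n → ℝ) → ℝ) (hφs : ContDiff ℝ (⊤ : ℕ∞) φ) (hφpos : ∀ x, 0 < φ x)
    (heq : ∀ i : Fin n, ∀ x, pd (pd φ i) i x / φ x
      - (∑ k, (pd φ k x) ^ 2) / (2 * φ x ^ 2) = φ x ^ 2 * f i x)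
    (hmix : ∀ i j : Fin n, i ≠ j → ∀ x, pd (pd φ j) i x = 0) :
    ∀ i j k : Fin n, i ≠ j → k ≠ j → i ≠ k → ∀ x,
      pd (f k) j x / (3 * f k x + f j x) = pd (f i) j x / (3 * f i x + f j x) := by
  have hφd : Differentiable ℝ φ := hφs.differentiable (by simp)
  have hpdφ : ∀ k, ContDiff ℝ (⊤ : ℕ∞) (pd φ k) := fun k => contDiff_pd hφs k
  have hpd2 : ∀ k l, ContDiff ℝ (⊤ : ℕ∞) (pd (pd φ k) l) := fun k l => contDiff_pd (hpdφ k) l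
  have hScd : ContDiff ℝ (⊤ : ℕ∞) (fun y => ∑ k, (pd φ k y) ^ 2) :=
    ContDiff.sum (fun k _ => (hpdφ k).pow 2)
  have hfun : ∀ m : Fin n,
      (fun y => pd (pd φ m) m y * φ y - (∑ k, (pd φ k y) ^ 2) / 2)
      = fun y => φ y ^ 4 * f m y := by
    intro m
    funext y
    have hpy : φ y ≠ 0 := (hφpos y).ne'
    have h := heq m y
    field_simp at h
    apply mul_left_cancel₀ (show (2:ℝ) * φ y ≠ 0 by positivity)
    linear_combination φ y * h
  have key : ∀ i j : Fin n, i ≠ j → ∀ x,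
      φ x * pd (f i) j x = -(pd φ j x) * (3 * f i x + f j x) := by
    intro i j hij x
    have hp : φ x ≠ 0 := (hφpos x).ne'
    -- third derivative vanishes
    have hA3 : pd (pd (pd φ i) i) j x = 0 := by
      have h0 : pd (pd φ i) j = fun _ => (0:ℝ) := funext (hmix j i (Ne.symm hij))
      rw [pd_comm (hpdφ i) i j x, h0, pd_zero]
    -- derivative of the gradient-square sum
    have hS : pd (fun y => ∑ k, (pd φ k y) ^ 2) j x
        = 2 * pd φ j x * pd (pd φ j) j x := by
      rw [pd_sum (fun k => (((hpdφ k).pow 2).differentiable (by simp)) x) j]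
      have hterm : ∀ k : Fin n, pd (fun y => pd φ k y ^ 2) j x
          = 2 * pd φ k x * pd (pd φ k) j x := by
        intro k
        rw [pd_pow (((hpdφ k).differentiable (by simp)) x) 2 j]
        norm_num
      rw [Finset.sum_congr rfl (fun k _ => hterm k), Finset.sum_eq_single j]
      · intro k _ hk
        rw [hmix j k (Ne.symm hk) x, mul_zero]
      · intro h; exact absurd (Finset.mem_univ j) h
    -- differentiate the multiplied PDE
    have dS2 : DifferentiableAt ℝ (fun y => (∑ k, (pd φ k y) ^ 2) / 2) x :=
      by simp only [div_eq_mul_inv]; exact (hScd.differentiable (by simp) x).mul_const _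
    have hED := congrArg (fun g => pd g j x) (hfun i)
    rw [pd_sub (u := fun y => pd (pd φ i) i y * φ y) ((((hpd2 i i).differentiable (by simp)) x).mul (hφd x)) dS2,
      pd_mul (((hpd2 i i).differentiable (by simp)) x) (hφd x),
      pd_div_const (hScd.differentiable (by simp) x),
      pd_mul (u := fun y => φ y ^ 4) ((hφd x).pow 4) (((hf i).differentiable (by simp)) x),
      pd_pow (hφd x) 4 j, hA3, hS] at hED
    have h1 := congrFun (hfun i) x
    have h2 := congrFun (hfun j) x
    beta_reduce at h1 h2
    apply mul_left_cancel₀ (pow_ne_zero 4 hp)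
    push_cast at hED
    linear_combination (-(φ x)) * hED + pd φ j x * h1 - pd φ j x * h2
  intro i j k hij hkj hik x
  rw [div_eq_div_iff (hne k j hkj x) (hne i j hij x)]
  apply mul_left_cancel₀ (hφpos x).ne'
  linear_combination (3 * f i x + f j x) * key k j hkj x
    - (3 * f k x + f j x) * key i j hij x
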